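/- arXiv:2505.16572 — 4 statements merged into one kernel-verified Lean document; each statement's English description precedes it below -/
import Mathlib

section
/- For a finite positive Borel measure μ on the unit circle, the potential V_μ(z) = ∫_T 1/|λ - z|² dμ(λ) is infinite μ-almost everywhere on T. -/
open MeasureTheory

noncomputable def Vpot (μ : Measure ℂ) (z : ℂ) : ENNReal :=
  ∫⁻ w, (ENNReal.ofReal (‖w - z‖ ^ 2))⁻¹ ∂μ

/-!
If `Vpot μ ζ ≤ N`, then every closed ball of radius `ρ` around `ζ` has `μ`-measure at most
`N ρ²`. Covering the set `{Vpot μ ≤ N}` by sets `Uₙ` with `∑ diam(Uₙ)²` small therefore shows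
that it is `μ`-null as soon as it lies in a set of zero two-dimensional Hausdorff measure. The
unit circle is such a set, being a `C¹` curve and hence of Hausdorff dimension `1`.
-/

open Metric Set
open scoped ENNReal NNReal

lemma Vpot_eq_lintegral_edist (μ : Measure ℂ) (z : ℂ) :
    Vpot μ z = ∫⁻ w, (edist w z ^ 2)⁻¹ ∂μ := by
  simp only [Vpot, edist_dist, dist_eq_norm, ENNReal.ofReal_pow (norm_nonneg _)]

lemma measure_closedEBall_le_mul_Vpot (μ : Measure ℂ) {ζ : ℂ} {ρ : ℝ≥0∞}
    (hV : Vpot μ ζ ≠ ∞) (hρ : ρ ≠ ∞) :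
    μ (closedEBall ζ ρ) ≤ ρ ^ 2 * Vpot μ ζ := by
  have hmean : μ (closedEBall ζ ρ) / ρ ^ 2 ≤ Vpot μ ζ := by
    rw [Vpot_eq_lintegral_edist, div_eq_mul_inv, mul_comm, ← lintegral_indicator_const
      isClosed_closedEBall.measurableSet]
    refine lintegral_mono (indicator_le fun w hw => ?_)
    gcongr
    exact hw
  rwa [ENNReal.div_le_iff_le_mul (Or.inr hV) (Or.inl (by simp [hρ])), mul_comm] at hmean

lemma measure_le_mul_tsum_ediam_sq (μ : Measure ℂ) {T : Set ℂ} {N : ℝ≥0}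
    (hT : ∀ ζ ∈ T, Vpot μ ζ ≤ N) {t : ℕ → Set ℂ} (hcover : T ⊆ ⋃ n, t n)
    (hdiam : ∀ n, ediam (t n) ≠ ∞) :
    μ T ≤ N * ∑' n, ⨆ _ : (t n).Nonempty, ediam (t n) ^ (2 : ℝ) := by
  have hpiece : ∀ n, μ (T ∩ t n) ≤ N * ⨆ _ : (t n).Nonempty, ediam (t n) ^ (2 : ℝ) := by
    intro n
    rcases (T ∩ t n).eq_empty_or_nonempty with hempty | ⟨ζ, hζT, hζt⟩
    · simp [hempty]
    have hVζ := hT ζ hζT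
    calc μ (T ∩ t n) ≤ μ (closedEBall ζ (ediam (t n))) :=
          measure_mono fun w hw => edist_le_ediam_of_mem hw.2 hζt
      _ ≤ ediam (t n) ^ 2 * Vpot μ ζ :=
          measure_closedEBall_le_mul_Vpot μ (ne_top_of_le_ne_top ENNReal.coe_ne_top hVζ) (hdiam n)
      _ ≤ N * ⨆ _ : (t n).Nonempty, ediam (t n) ^ (2 : ℝ) := by
          rw [mul_comm, ENNReal.rpow_two]
          gcongr
          exact le_iSup_of_le ⟨ζ, hζt⟩ le_rfl
  calc μ T = μ (⋃ n, T ∩ t n) := by rw [← inter_iUnion, inter_eq_left.mpr hcover]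
    _ ≤ ∑' n, μ (T ∩ t n) := measure_iUnion_le _
    _ ≤ ∑' n, N * ⨆ _ : (t n).Nonempty, ediam (t n) ^ (2 : ℝ) := ENNReal.tsum_le_tsum hpiece
    _ = _ := ENNReal.tsum_mul_left

lemma measure_setOf_Vpot_le_eq_zero (μ : Measure ℂ) {S : Set ℂ} (hS : μH[2] S = 0) (N : ℝ≥0) :
    μ {ζ ∈ S | Vpot μ ζ ≤ N} = 0 := by
  -- compare with the covers of mesh `1` in the formula for `μH[2] S`
  have hdiv : μ {ζ ∈ S | Vpot μ ζ ≤ N} / N ≤ μH[2] S := by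
    rw [Measure.hausdorffMeasure_apply]
    refine le_iSup₂_of_le 1 one_pos <| le_iInf fun t => le_iInf fun hcover => le_iInf fun hdiam =>
      ENNReal.div_le_of_le_mul' ?_
    exact measure_le_mul_tsum_ediam_sq μ (fun ζ hζ => hζ.2)
      ((sep_subset _ _).trans hcover) fun n => ne_top_of_le_ne_top ENNReal.one_ne_top (hdiam n)
  simpa [hS, ENNReal.div_eq_zero_iff] using hdiv

lemma ae_Vpot_eq_top_of_hausdorffMeasure_eq_zero (μ : Measure ℂ) {S : Set ℂ}
    (hS : μH[2] S = 0) (hμS : ∀ᵐ ζ ∂μ, ζ ∈ S) : ∀ᵐ ζ ∂μ, Vpot μ ζ = ∞ := by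
  have hS_top : ∀ᵐ ζ ∂μ, ζ ∈ S → Vpot μ ζ = ∞ := by
    rw [ae_iff]
    refine measure_mono_null (fun ζ hζ => ?_) (measure_iUnion_null fun N : ℕ =>
      measure_setOf_Vpot_le_eq_zero μ hS N)
    obtain ⟨hζS, hζV⟩ := Classical.not_imp.mp hζ
    obtain ⟨N, hN⟩ := ENNReal.exists_nat_gt hζV
    exact mem_iUnion.mpr ⟨N, hζS, by exact_mod_cast hN.le⟩
  filter_upwards [hμS, hS_top] with ζ hζS hζ using hζ hζS

lemma hausdorffMeasure_two_sphere_eq_zero : μH[2] (sphere (0 : ℂ) 1) = 0 := by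
  have hparam : sphere (0 : ℂ) 1 ⊆ range fun t : ℝ => Complex.exp (t * Complex.I) := fun z hz =>
    ⟨z.arg, by simpa [mem_sphere_zero_iff_norm.mp hz] using Complex.norm_mul_exp_arg_mul_I z⟩
  have hsmooth : ContDiff ℝ 1 fun t : ℝ => Complex.exp (t * Complex.I) :=
    (Complex.ofRealCLM.contDiff.mul contDiff_const).cexp
  have hdim : dimH (sphere (0 : ℂ) 1) < (2 : ℝ≥0) := calc
    dimH (sphere (0 : ℂ) 1) ≤ 1 := (dimH_mono hparam).trans (by simpa using hsmooth.dimH_range_le)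
    _ < (2 : ℝ≥0) := by norm_num
  simpa using hausdorffMeasure_of_dimH_lt hdim

theorem stmt1_general (μ : Measure ℂ)
    (hμ : μ {z : ℂ | ‖z‖ ≠ 1} = 0) :
    ∀ᵐ ζ ∂μ, Vpot μ ζ = ⊤ :=
  ae_Vpot_eq_top_of_hausdorffMeasure_eq_zero μ hausdorffMeasure_two_sphere_eq_zero
    (measure_mono_null (fun z hz => by simpa using hz) hμ)

theorem stmt1 (μ : Measure ℂ) [IsFiniteMeasure μ]
    (hμ : μ {z : ℂ | ‖z‖ ≠ 1} = 0) :
    ∀ᵐ ζ ∂μ, Vpot μ ζ = ⊤ :=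
  stmt1_general μ hμ
end

section
/- Let a, b be bounded analytic functions on the unit disk with |a(z)|² + |b(z)|² ≤ 1 for all z in the disk (in particular both bounded by 1 in modulus). Suppose ζ_1, …, ζ_N are distinct points of the unit circle T such that |b(z)| → 1 as z → ζ_j for each j, and a(z) = g(z)·∏_{j=1}^N (z - ζ_j) for some bounded analytic g on the disk with inf_D |g| > 0. If moreover liminf_{z→λ, z∈D} |a(z)| > 0 for each λ ∈ T \ {ζ_1,…,ζ_N}, then a and b form a Corona pair, i.e., inf_{z∈D}(|a(z)| + |b(z)|) > 0. -/
theorem stmt5 (N : ℕ) (ζ : Fin N → ℂ) (hinj : Function.Injective ζ)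
    (hζ : ∀ j, ‖ζ j‖ = 1)
    (a b g : ℂ → ℂ)
    (ha : DifferentiableOn ℂ a (Metric.ball 0 1))
    (hb : DifferentiableOn ℂ b (Metric.ball 0 1))
    (hg : DifferentiableOn ℂ g (Metric.ball 0 1))
    (hgbdd : ∃ M : ℝ, ∀ z ∈ Metric.ball (0:ℂ) 1, ‖g z‖ ≤ M)
    (hbound : ∀ z ∈ Metric.ball (0:ℂ) 1,
      ‖a z‖ ^ 2 + ‖b z‖ ^ 2 ≤ 1)
    (hblim : ∀ j : Fin N, Filter.Tendsto (fun z => ‖b z‖)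
      (nhdsWithin (ζ j) (Metric.ball 0 1)) (nhds 1))
    (hfact : ∀ z ∈ Metric.ball (0:ℂ) 1, a z = g z * ∏ j : Fin N, (z - ζ j))
    (hginf : ∃ c : ℝ, 0 < c ∧ ∀ z ∈ Metric.ball (0:ℂ) 1, c ≤ ‖g z‖)
    (hliminf : ∀ l : ℂ, ‖l‖ = 1 → l ∉ Set.range ζ →
      0 < Filter.liminf (fun z => ‖a z‖) (nhdsWithin l (Metric.ball 0 1))) :
    ∃ c : ℝ, 0 < c ∧ ∀ z ∈ Metric.ball (0:ℂ) 1,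
      c ≤ ‖a z‖ + ‖b z‖ := by
  obtain ⟨c, hc, hgc⟩ := hginf
  by_contra hcon
  push_neg at hcon
  have hseq : ∀ n : ℕ, ∃ z ∈ Metric.ball (0:ℂ) 1,
      ‖a z‖ + ‖b z‖ < 1/(n+1) := by
    intro n
    obtain ⟨z, hz, hlt⟩ := hcon (1/(n+1)) (by positivity)
    exact ⟨z, hz, hlt⟩
  choose u hu hult using hseq
  obtain ⟨p, hp, φ, hφ, hφlim⟩ := (isCompact_closedBall (0:ℂ) 1).tendsto_subseq
    (fun n => Metric.ball_subset_closedBall (hu n))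
  have hdiv : Filter.Tendsto (fun n : ℕ => 1/((n:ℝ)+1)) Filter.atTop (nhds 0) :=
    tendsto_one_div_add_atTop_nhds_zero_nat
  have hsmall : Filter.Tendsto
      (fun n => ‖a (u (φ n))‖ + ‖b (u (φ n))‖)
      Filter.atTop (nhds 0) := by
    apply squeeze_zero (fun n => by positivity)
      (fun n => ?_) hdiv
    have h1 : ‖a (u (φ n))‖ + ‖b (u (φ n))‖ < 1/((φ n : ℝ)+1) :=
      hult (φ n)
    have h2 : (1:ℝ)/((φ n : ℝ)+1) ≤ 1/((n:ℝ)+1) := by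
      apply one_div_le_one_div_of_le (by positivity)
      have h3 : n ≤ φ n := hφ.le_apply
      have h4 : (n:ℝ) ≤ φ n := Nat.cast_le.mpr h3
      linarith
    linarith
  by_cases hpr : p ∈ Set.range ζ
  · obtain ⟨j, rfl⟩ := hpr
    have htw : Filter.Tendsto (u ∘ φ) Filter.atTop
        (nhdsWithin (ζ j) (Metric.ball 0 1)) :=
      tendsto_nhdsWithin_of_tendsto_nhds_of_eventually_within _ hφlim
        (Filter.Eventually.of_forall fun n => hu (φ n))
    have h1 := (hblim j).comp htw
    have h0 : Filter.Tendsto (fun n => ‖b (u (φ n))‖)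
        Filter.atTop (nhds 0) := by
      apply squeeze_zero (fun n => norm_nonneg _)
        (fun n => le_add_of_nonneg_left (norm_nonneg _)) hsmall
    exact one_ne_zero (tendsto_nhds_unique h1 h0)
  · set F : ℂ → ℝ := fun z => c * ∏ j : Fin N, ‖z - ζ j‖ with hF
    have hFcont : Continuous F :=
      continuous_const.mul (continuous_finset_prod _ fun j _ =>
        continuous_norm.comp (continuous_id.sub continuous_const))
    have hFp : 0 < F p := by
      apply mul_pos hc
      apply Finset.prod_pos
      intro j _
      rw [norm_pos_iff, sub_ne_zero]
      exact fun h => hpr ⟨j, h.symm⟩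
    have hFle : ∀ n, F (u (φ n)) ≤ ‖a (u (φ n))‖ := by
      intro n
      have hz := hu (φ n)
      rw [hfact _ hz, norm_mul, norm_prod]
      exact mul_le_mul_of_nonneg_right (hgc _ hz)
        (Finset.prod_nonneg fun j _ => norm_nonneg _)
    have hF1 : Filter.Tendsto (fun n => F (u (φ n))) Filter.atTop (nhds (F p)) :=
      (hFcont.tendsto p).comp hφlim
    have hF0 : Filter.Tendsto (fun n => F (u (φ n))) Filter.atTop (nhds 0) := by
      apply squeeze_zero
        (fun n => mul_nonneg hc.le (Finset.prod_nonneg fun j _ => norm_nonneg _))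
        (fun n => (hFle n).trans (le_add_of_nonneg_right (norm_nonneg _))) hsmall
    exact hFp.ne' (tendsto_nhds_unique hF1 hF0)
end

section
/- Let ζ_1, …, ζ_N be distinct points on the unit circle and μ = Σ_j δ_{ζ_j}. A bounded analytic function a on the unit disk D satisfies sup_{z∈D} |a(z)|² V_μ(z) < ∞ if and only if there exists a bounded analytic g on D with a(z) = g(z)·∏_{j=1}^N (z - ζ_j) for all z ∈ D. -/
/-!
Write `P(z) = ∏ⱼ (z - ζⱼ)` and let `d(z)` be the distance from `z` to the nearest `ζⱼ`. Since the
points are separated and the disk is bounded, `|P(z)|` is comparable to `d(z)` on `D`, and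
`V_μ(z)` is comparable to `d(z)⁻²`. Hence `|a|² V_μ` is bounded iff `|a| / |P|` is bounded on `D`,
and as `P` does not vanish on `D`, `g = a / P` is then the required bounded analytic factor.
-/

open Finset Metric Function

section Real

variable {ι : Type*} [Fintype ι] {d : ι → ℝ} {x C K : ℝ}

lemma le_sqrt_mul_of_sq_mul_sum_inv_sq_le (hx : 0 ≤ x) (h : x ^ 2 * ∑ k, 1 / d k ^ 2 ≤ C)
    {j : ι} (hj : 0 < d j) : x ≤ √C * d j := by
  have hsq : x ^ 2 ≤ C * d j ^ 2 := by
    rw [← div_le_iff₀ (by positivity), div_eq_mul_one_div]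
    exact (mul_le_mul_of_nonneg_left
      (single_le_sum (f := fun k => 1 / d k ^ 2) (fun _ _ => by positivity) (mem_univ j))
      (sq_nonneg x)).trans h
  have hC : 0 ≤ C := nonneg_of_mul_nonneg_left ((sq_nonneg x).trans hsq) (by positivity)
  rw [← pow_le_pow_iff_left₀ hx (by positivity) two_ne_zero, mul_pow, Real.sq_sqrt hC]
  exact hsq

lemma sq_mul_sum_inv_sq_le (hx : 0 ≤ x) (h : ∀ j, x ≤ K * d j) :
    x ^ 2 * ∑ j, 1 / d j ^ 2 ≤ Fintype.card ι * K ^ 2 := by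
  rw [mul_sum, ← nsmul_eq_mul, ← card_univ]
  refine sum_le_card_nsmul _ _ _ fun j _ => ?_
  rcases eq_or_ne (d j) 0 with hd | hd
  · simp [hd, sq_nonneg]
  · rw [mul_one_div, div_le_iff₀ (by positivity), ← mul_pow]
    exact pow_le_pow_left₀ hx (h j) 2

end Real

section MetricSpace

variable {X ι : Type*} [MetricSpace X] {ζ : ι → X}

lemma exists_pos_le_dist_of_injective [Finite ι] (hζ : Injective ζ) :
    ∃ δ > 0, Pairwise fun j k => δ ≤ dist (ζ j) (ζ k) := by
  rcases isEmpty_or_nonempty {p : ι × ι // p.1 ≠ p.2} with hempty | hne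
  · exact ⟨1, one_pos, fun j k hjk => (hempty.false ⟨(j, k), hjk⟩).elim⟩
  · obtain ⟨p, hp⟩ := Finite.exists_min fun p : {p : ι × ι // p.1 ≠ p.2} => dist (ζ p.1.1) (ζ p.1.2)
    exact ⟨_, dist_pos.2 (hζ.ne p.2), fun j k hjk => hp ⟨(j, k), hjk⟩⟩

variable [Fintype ι]

/-- Seen from `z`, every point other than the nearest one lies at distance at least half the
minimal separation. -/
lemma exists_pos_mul_dist_le_prod_dist [Nonempty ι] (hζ : Injective ζ) :
    ∃ c > 0, ∀ z, ∃ j, c * dist z (ζ j) ≤ ∏ k, dist z (ζ k) := by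
  classical
  obtain ⟨δ, hδ, hsep⟩ := exists_pos_le_dist_of_injective hζ
  refine ⟨(δ / 2) ^ (Fintype.card ι - 1), by positivity, fun z => ?_⟩
  obtain ⟨j, hj⟩ := Finite.exists_min fun k => dist z (ζ k)
  refine ⟨j, ?_⟩
  have hfar : ∀ k ∈ univ.erase j, δ / 2 ≤ dist z (ζ k) := fun k hk => by
    have := dist_triangle_left (ζ k) (ζ j) z
    linarith [hsep (ne_of_mem_erase hk), hj k]
  rw [← mul_prod_erase univ _ (mem_univ j), mul_comm]
  gcongr
  calc (δ / 2) ^ (Fintype.card ι - 1) = ∏ _k ∈ univ.erase j, δ / 2 := by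
        rw [prod_const, card_erase_of_mem (mem_univ j), card_univ]
    _ ≤ ∏ k ∈ univ.erase j, dist z (ζ k) := prod_le_prod (fun _ _ => by positivity) hfar

lemma prod_dist_le_pow_mul_dist {R : ℝ} {z : X} (hR : ∀ k, dist z (ζ k) ≤ R) (j : ι) :
    ∏ k, dist z (ζ k) ≤ R ^ (Fintype.card ι - 1) * dist z (ζ j) := by
  classical
  rw [← mul_prod_erase univ _ (mem_univ j), mul_comm]
  gcongr
  calc ∏ k ∈ univ.erase j, dist z (ζ k) ≤ ∏ _k ∈ univ.erase j, R :=
        prod_le_prod (fun _ _ => dist_nonneg) fun k _ => hR k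
    _ = R ^ (Fintype.card ι - 1) := by rw [prod_const, card_erase_of_mem (mem_univ j), card_univ]

end MetricSpace

lemma exists_bound_norm_div_prod_sub {ι : Type*} [Fintype ι] {ζ : ι → ℂ} (hinj : Injective ζ)
    {U : Set ℂ} (hζ : ∀ j, ζ j ∉ U) {a : ℂ → ℂ} (habdd : ∃ M : ℝ, ∀ z ∈ U, ‖a z‖ ≤ M) {C : ℝ}
    (hC : ∀ z ∈ U, ‖a z‖ ^ 2 * ∑ j, 1 / ‖z - ζ j‖ ^ 2 ≤ C) :
    ∃ M : ℝ, ∀ z ∈ U, ‖a z / ∏ j, (z - ζ j)‖ ≤ M := by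
  rcases isEmpty_or_nonempty ι with hι | hι
  · simpa using habdd
  obtain ⟨c, hc, hcP⟩ := exists_pos_mul_dist_le_prod_dist hinj
  refine ⟨√C / c, fun z hz => ?_⟩
  obtain ⟨j, hj⟩ := hcP z
  simp only [dist_eq_norm] at hj
  have hd : ∀ k, 0 < ‖z - ζ k‖ := fun k =>
    norm_pos_iff.2 (sub_ne_zero.2 (ne_of_mem_of_not_mem hz (hζ k)))
  rw [norm_div, norm_prod, div_le_iff₀ (prod_pos fun k _ => hd k), div_mul_eq_mul_div,
    le_div_iff₀ hc]
  calc ‖a z‖ * c ≤ √C * ‖z - ζ j‖ * c :=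
        mul_le_mul_of_nonneg_right
          (le_sqrt_mul_of_sq_mul_sum_inv_sq_le (norm_nonneg _) (hC z hz) (hd j)) hc.le
    _ ≤ √C * ∏ k, ‖z - ζ k‖ := by
        rw [mul_assoc, mul_comm _ c]
        gcongr

theorem stmt7 (N : ℕ) (ζ : Fin N → ℂ) (hinj : Function.Injective ζ)
    (hζ : ∀ j, ‖ζ j‖ = 1)
    (a : ℂ → ℂ) (ha : DifferentiableOn ℂ a (Metric.ball 0 1))
    (habdd : ∃ M : ℝ, ∀ z ∈ Metric.ball (0:ℂ) 1, ‖a z‖ ≤ M) :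
    (∃ C : ℝ, ∀ z ∈ Metric.ball (0:ℂ) 1,
        ‖a z‖ ^ 2 * ∑ j : Fin N, 1 / ‖z - ζ j‖ ^ 2 ≤ C) ↔
      ∃ g : ℂ → ℂ, DifferentiableOn ℂ g (Metric.ball 0 1) ∧
        (∃ M : ℝ, ∀ z ∈ Metric.ball (0:ℂ) 1, ‖g z‖ ≤ M) ∧
        ∀ z ∈ Metric.ball (0:ℂ) 1, a z = g z * ∏ j : Fin N, (z - ζ j) := by
  have hout : ∀ j, ζ j ∉ ball (0 : ℂ) 1 := fun j => by simp [hζ j]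
  have hP : ∀ z ∈ ball (0 : ℂ) 1, ∏ j, (z - ζ j) ≠ 0 := fun z hz =>
    prod_ne_zero_iff.2 fun j _ => sub_ne_zero.2 (ne_of_mem_of_not_mem hz (hout j))
  constructor
  · rintro ⟨C, hC⟩
    exact ⟨fun z => a z / ∏ j, (z - ζ j), ha.div (by fun_prop) hP,
      exists_bound_norm_div_prod_sub hinj hout habdd hC,
      fun z hz => (div_mul_cancel₀ _ (hP z hz)).symm⟩
  · rintro ⟨g, -, ⟨M, hM⟩, hag⟩
    have hM0 : 0 ≤ M := (norm_nonneg _).trans (hM 0 (mem_ball_self one_pos))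
    refine ⟨N * (M * 2 ^ (N - 1)) ^ 2, fun z hz => ?_⟩
    have h2 : ∀ k, dist z (ζ k) ≤ 2 := fun k => by
      linarith [dist_triangle z 0 (ζ k), mem_ball.1 hz, dist_zero_left (ζ k), hζ k]
    have hbound : ∀ j, ‖a z‖ ≤ M * 2 ^ (N - 1) * ‖z - ζ j‖ := fun j =>
      calc ‖a z‖ = ‖g z‖ * ∏ k, dist z (ζ k) := by simp [hag z hz, norm_prod, dist_eq_norm]
        _ ≤ M * (2 ^ (N - 1) * dist z (ζ j)) := by
          gcongr
          · exact hM z hz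
          · simpa using prod_dist_le_pow_mul_dist h2 j
        _ = M * 2 ^ (N - 1) * ‖z - ζ j‖ := by rw [dist_eq_norm, mul_assoc]
    simpa using sq_mul_sum_inv_sq_le (norm_nonneg _) hbound
end

section
/- For a point ζ on the unit circle and w in the open unit disk, the local Dirichlet integral of the Cauchy–Szegő kernel c_w(z) = 1/(1 - conj(w)z) equals |w|²/((1-|w|²)·|ζ - w|²). -/
/-!
Substitute `z = φ u` with `φ = Complex.mobius w`, the involutive automorphism of the disc
exchanging `0` and `w`. Since `c_w ∘ φ` is affine, `|c_w' (φ u) φ' u|² = |w|² / (1 - |w|²)²`, and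
the Poisson kernel `P(z, ζ) = (1 - |z|²) / |z - ζ|²` transforms as
`P(φ u, φ η) = |1 - conj w η|² / (1 - |w|²) · P(u, η)`. With `η = φ ζ` the integral becomes a
constant multiple of `∫_D P(u, η) dA(u)`, which is `π` because every circle average of the harmonic
function `P(·, η)` equals `P(0, η) = 1`.
-/

open MeasureTheory Real Set Metric ComplexConjugate

theorem integral_Ioo_circleMap {E : Type*} [NormedAddCommGroup E] [NormedSpace ℝ E]
    (f : ℂ → E) (c : ℂ) (R : ℝ) :
    ∫ θ in Ioo (-π) π, f (circleMap c R θ) = (2 * π) • circleAverage f c R := by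
  rw [circleAverage_eq_integral_add (-π), smul_inv_smul₀ (by positivity),
    intervalIntegral.integral_comp_add_right (fun θ ↦ f (circleMap c R θ)),
    intervalIntegral.integral_of_le (by linarith [pi_pos]), integral_Ioc_eq_integral_Ioo]
  ring_nf

theorem Complex.polarCoord_symm_eq_circleMap (p : ℝ × ℝ) :
    Complex.polarCoord.symm p = circleMap 0 p.1 p.2 := by
  simp [circleMap_zero, Complex.exp_mul_I]

theorem lintegral_Ioo_circleMap_of_lt {f : ℂ → ℝ} {r R : ℝ} (hr : |r| < R)
    (hf : ContinuousOn f (ball 0 R)) (hf₀ : ∀ u ∈ ball 0 R, 0 ≤ f u) :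
    ∫⁻ θ in Ioo (-π) π, ENNReal.ofReal (f (circleMap 0 r θ))
      = ENNReal.ofReal (2 * π * circleAverage f 0 r) := by
  have hmem (θ : ℝ) : circleMap 0 r θ ∈ ball 0 R := by
    rwa [mem_ball_zero_iff, norm_circleMap_zero]
  have hcont : Continuous fun θ ↦ f (circleMap 0 r θ) :=
    hf.comp_continuous (continuous_circleMap 0 r) hmem
  rw [← smul_eq_mul, ← integral_Ioo_circleMap, ofReal_integral_eq_lintegral_ofReal
    (hcont.integrableOn_Icc.mono_set Ioo_subset_Icc_self) (ae_of_all _ fun θ ↦ hf₀ _ (hmem θ))]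

theorem lintegral_Ioo_indicator_ball_circleMap {f : ℂ → ℝ} {r R : ℝ} (hr : 0 < r)
    (hf : ContinuousOn f (ball 0 R)) (hf₀ : ∀ u ∈ ball 0 R, 0 ≤ f u) :
    ∫⁻ θ in Ioo (-π) π, (ball 0 R).indicator (fun u ↦ ENNReal.ofReal (f u)) (circleMap 0 r θ)
      = (Iio R).indicator (fun r ↦ ENNReal.ofReal (2 * π * circleAverage f 0 r)) r := by
  have hmem_iff (θ : ℝ) : circleMap 0 r θ ∈ ball 0 R ↔ r ∈ Iio R := by
    rw [mem_ball_zero_iff, norm_circleMap_zero, abs_of_pos hr, mem_Iio]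
  by_cases hrR : r ∈ Iio R
  · rw [indicator_of_mem hrR,
      ← lintegral_Ioo_circleMap_of_lt ((abs_of_pos hr).trans_lt hrR) hf hf₀]
    exact setLIntegral_congr_fun measurableSet_Ioo fun θ _ ↦
      indicator_of_mem ((hmem_iff θ).mpr hrR) _
  · simp [indicator_of_notMem hrR, indicator_of_notMem (mt (hmem_iff _).mp hrR)]

theorem lintegral_ball_zero_eq_of_circleAverage_eq {f : ℂ → ℝ} {R c : ℝ} (hR : 0 ≤ R)
    (hf : ContinuousOn f (ball 0 R)) (hf₀ : ∀ u ∈ ball 0 R, 0 ≤ f u)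
    (havg : ∀ r ∈ Ioo 0 R, circleAverage f 0 r = c) :
    ∫⁻ u in ball 0 R, ENNReal.ofReal (f u) = ENNReal.ofReal (π * R ^ 2 * c) := by
  classical
  set F : ℂ → ENNReal := (ball 0 R).indicator fun u ↦ ENNReal.ofReal (f u)
  have hF : Measurable F := by
    have := (ENNReal.continuous_ofReal.comp_continuousOn hf).measurable_piecewise (g := 0)
      continuousOn_const measurableSet_ball
    rwa [piecewise_eq_indicator] at this
  have hid : ∫ r in Ioo 0 R, r = R ^ 2 / 2 := by
    rw [← integral_Ioc_eq_integral_Ioo, ← intervalIntegral.integral_of_le hR, integral_id]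
    ring
  calc ∫⁻ u in ball 0 R, ENNReal.ofReal (f u)
      = ∫⁻ p in Ioi 0 ×ˢ Ioo (-π) π, ENNReal.ofReal p.1 * F (circleMap 0 p.1 p.2) := by
        rw [← lintegral_indicator measurableSet_ball, ← Complex.lintegral_comp_polarCoord_symm,
          polarCoord_target]
        simp_rw [smul_eq_mul, Complex.polarCoord_symm_eq_circleMap]
        rfl
    _ = ∫⁻ r in Ioi 0, ENNReal.ofReal r * ∫⁻ θ in Ioo (-π) π, F (circleMap 0 r θ) := by
        rw [Measure.volume_eq_prod, ← Measure.prod_restrict, lintegral_prod]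
        · refine lintegral_congr fun r ↦ ?_
          dsimp only
          exact lintegral_const_mul _ (hF.comp (continuous_circleMap 0 r).measurable)
        · exact (Measurable.mul (by fun_prop)
            (hF.comp (by unfold circleMap; fun_prop))).aemeasurable
    _ = ∫⁻ r in Ioo 0 R, ENNReal.ofReal r * ENNReal.ofReal (2 * π * circleAverage f 0 r) := by
        rw [setLIntegral_congr_fun measurableSet_Ioi fun r hr ↦ by
            rw [lintegral_Ioo_indicator_ball_circleMap hr hf hf₀, ← indicator_mul_right],
          lintegral_indicator measurableSet_Iio, Measure.restrict_restrict measurableSet_Iio,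
          Iio_inter_Ioi]
    _ = ENNReal.ofReal (π * R ^ 2 * c) := by
        rw [setLIntegral_congr_fun measurableSet_Ioo fun r hr ↦ by rw [havg r hr],
          lintegral_mul_const _ ENNReal.measurable_ofReal,
          ← ofReal_integral_eq_lintegral_ofReal
            (continuous_id'.integrableOn_Icc.mono_set Ioo_subset_Icc_self)
            (ae_restrict_of_forall_mem measurableSet_Ioo fun r (hr : r ∈ Ioo 0 R) ↦ hr.1.le),
          hid, ← ENNReal.ofReal_mul (by positivity)]
        ring_nf

namespace Complex

theorem det_restrictScalars_toSpanSingleton (c : ℂ) :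
    ((ContinuousLinearMap.toSpanSingleton ℂ c).restrictScalars ℝ).det = normSq c := by
  rw [ContinuousLinearMap.det, ContinuousLinearMap.coe_restrictScalars,
    LinearMap.det_restrictScalars]
  simp [Algebra.norm_complex_apply]

theorem integral_image_eq_integral_normSq_deriv_smul {E : Type*} [NormedAddCommGroup E]
    [NormedSpace ℝ E] {s : Set ℂ} {f f' : ℂ → ℂ} (hs : MeasurableSet s)
    (hf' : ∀ x ∈ s, HasDerivWithinAt f (f' x) s x) (hf : InjOn f s) (g : ℂ → E) :
    ∫ x in f '' s, g x = ∫ x in s, normSq (f' x) • g (f x) := by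
  rw [integral_image_eq_integral_abs_det_fderiv_smul volume hs
    (fun x hx ↦ (hf' x hx).hasFDerivWithinAt.restrictScalars ℝ) hf g]
  simp_rw [det_restrictScalars_toSpanSingleton, abs_of_nonneg (normSq_nonneg _)]

-- `poissonKernel 0 u η` is `P(u, η)`: the interior point is the second argument. The average is
-- taken over that interior point, so it is the mean value property, not the Poisson formula.
theorem circleAverage_poissonKernel_eq_one {η : ℂ} {r : ℝ} (hr : |r| < ‖η‖) :
    circleAverage (fun u ↦ poissonKernel 0 u η) 0 r = 1 := by
  set g : ℂ → ℂ := fun u ↦ herglotzRieszKernel 0 u η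
  have hg : DifferentiableOn ℂ g {η}ᶜ := by
    intro u hu
    simp only [g, herglotzRieszKernel, sub_zero]
    exact (DifferentiableAt.div (by fun_prop) (by fun_prop)
      (sub_ne_zero.mpr (Ne.symm hu))).differentiableWithinAt
  have hsub : closedBall (0 : ℂ) |r| ⊆ {η}ᶜ := fun u hu h ↦ by
    rw [mem_closedBall_zero_iff, h] at hu
    exact hu.not_gt hr
  have hint : CircleIntegrable g 0 r :=
    (hg.continuousOn.mono (sphere_subset_closedBall.trans hsub)).circleIntegrable'
  have hη : η ≠ 0 := norm_pos_iff.mp ((abs_nonneg r).trans_lt hr)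
  calc circleAverage (fun u ↦ poissonKernel 0 u η) 0 r
      = circleAverage (reCLM ∘ g) 0 r := by
        congr 1
        ext u
        exact congrFun poissonKernel_eq_re_herglotzRieszKernel η
    _ = (g 0).re := by
        rw [reCLM.circleAverage_comp_comm hint, (hg.diffContOnCl_ball hsub).circleAverage]
        rfl
    _ = 1 := by simp [g, herglotzRieszKernel, hη]

theorem integral_ball_poissonKernel {η : ℂ} {R : ℝ} (hR : 0 ≤ R) (hRη : R ≤ ‖η‖) :
    ∫ u in ball 0 R, poissonKernel 0 u η = π * R ^ 2 := by
  have hlt {u : ℂ} (hu : u ∈ ball 0 R) : ‖u‖ < ‖η‖ := (mem_ball_zero_iff.mp hu).trans_le hRη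
  have hcont : ContinuousOn (fun u ↦ poissonKernel 0 u η) (ball 0 R) := by
    refine ContinuousOn.div (by fun_prop) (by fun_prop) fun u hu ↦ ?_
    have : η - u ≠ 0 := sub_ne_zero.mpr fun h ↦ (hlt hu).ne (by rw [h])
    simpa using this
  have hnonneg : ∀ u ∈ ball 0 R, 0 ≤ poissonKernel 0 u η := fun u hu ↦ by
    simp only [poissonKernel, sub_zero]
    exact div_nonneg (sub_nonneg.mpr (pow_le_pow_left₀ (norm_nonneg u) (hlt hu).le 2))
      (sq_nonneg _)
  rw [integral_eq_lintegral_of_nonneg_ae (ae_restrict_of_forall_mem measurableSet_ball hnonneg)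
      (hcont.aestronglyMeasurable measurableSet_ball),
    lintegral_ball_zero_eq_of_circleAverage_eq hR hcont hnonneg
      fun r hr ↦ circleAverage_poissonKernel_eq_one
        ((abs_of_pos hr.1).trans_lt hr.2 |>.trans_le hRη),
    mul_one, ENNReal.toReal_ofReal (by positivity)]

noncomputable def mobius (w z : ℂ) : ℂ := (w - z) / (1 - conj w * z)

section Mobius

variable {w u v : ℂ}

theorem one_sub_conj_mul_ne_zero (hw : ‖w‖ < 1) (hu : ‖u‖ ≤ 1) : 1 - conj w * u ≠ 0 := by
  rw [sub_ne_zero]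
  intro h
  have : ‖conj w * u‖ < 1 := by
    rw [norm_mul, norm_conj]
    exact mul_lt_one_of_nonneg_of_lt_one_left (norm_nonneg w) hw hu
  simp [← h] at this

theorem normSq_one_sub_conj_mul_sub_normSq_sub (w u : ℂ) :
    normSq (1 - conj w * u) - normSq (w - u) = (1 - normSq w) * (1 - normSq u) := by
  simp only [normSq_apply, sub_re, sub_im, mul_re, mul_im, one_re, one_im, conj_re, conj_im]
  ring

theorem mobius_sub_mobius (hu : 1 - conj w * u ≠ 0) (hv : 1 - conj w * v ≠ 0) :
    mobius w u - mobius w v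
      = (1 - normSq w) * (v - u) / ((1 - conj w * u) * (1 - conj w * v)) := by
  rw [mobius, mobius, div_sub_div _ _ hu hv, ← mul_conj]
  ring

theorem one_sub_conj_mul_mobius (hu : 1 - conj w * u ≠ 0) :
    1 - conj w * mobius w u = (1 - normSq w) / (1 - conj w * u) := by
  rw [mobius, ← mul_conj]
  field_simp
  ring

theorem one_sub_normSq_ne_zero (hw : ‖w‖ < 1) : (1 : ℂ) - normSq w ≠ 0 := by
  rw [← ofReal_one, ← ofReal_sub, ofReal_ne_zero, normSq_eq_norm_sq]
  nlinarith [norm_nonneg w]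

theorem mobius_mobius (hw : ‖w‖ < 1) (hu : 1 - conj w * u ≠ 0) : mobius w (mobius w u) = u := by
  rw [mobius, one_sub_conj_mul_mobius hu, mobius, div_eq_iff, mul_div_assoc', sub_div' hu,
    div_left_inj' hu, ← mul_conj]
  · ring
  · exact div_ne_zero (one_sub_normSq_ne_zero hw) hu

theorem one_sub_normSq_mobius (hu : 1 - conj w * u ≠ 0) :
    1 - normSq (mobius w u) = (1 - normSq w) * (1 - normSq u) / normSq (1 - conj w * u) := by
  rw [mobius, normSq_div, one_sub_div (normSq_eq_zero.not.mpr hu),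
    normSq_one_sub_conj_mul_sub_normSq_sub]

theorem norm_mobius_lt_one (hw : ‖w‖ < 1) (hu : ‖u‖ < 1) : ‖mobius w u‖ < 1 := by
  have hN := normSq_pos.mpr (one_sub_conj_mul_ne_zero hw hu.le)
  have : 0 < 1 - normSq (mobius w u) := by
    rw [one_sub_normSq_mobius (one_sub_conj_mul_ne_zero hw hu.le), normSq_eq_norm_sq,
      normSq_eq_norm_sq]
    have := sq_lt_one_iff₀ (norm_nonneg w) |>.mpr hw
    have := sq_lt_one_iff₀ (norm_nonneg u) |>.mpr hu
    apply div_pos (mul_pos _ _) hN <;> linarith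
  rw [normSq_eq_norm_sq] at this
  nlinarith [norm_nonneg (mobius w u)]

theorem norm_mobius_of_norm_eq_one (hw : ‖w‖ < 1) (hv : ‖v‖ = 1) : ‖mobius w v‖ = 1 := by
  have h := one_sub_normSq_mobius (one_sub_conj_mul_ne_zero hw hv.le)
  rw [normSq_eq_norm_sq v, hv] at h
  simp only [one_pow, sub_self, mul_zero, zero_div, sub_eq_zero, normSq_eq_norm_sq] at h
  exact (pow_eq_one_iff_of_nonneg (norm_nonneg _) two_ne_zero).mp h.symm

theorem hasDerivAt_mobius (hu : 1 - conj w * u ≠ 0) :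
    HasDerivAt (mobius w) (-(1 - normSq w) / (1 - conj w * u) ^ 2) u := by
  have h : HasDerivAt (mobius w)
      ((-1 * (1 - conj w * u) - (w - u) * -(conj w * 1)) / (1 - conj w * u) ^ 2) u :=
    ((hasDerivAt_id' u).const_sub w).div (((hasDerivAt_id' u).const_mul (conj w)).const_sub 1) hu
  convert h using 2
  rw [← mul_conj]
  ring

theorem injOn_mobius_ball (hw : ‖w‖ < 1) : InjOn (mobius w) (ball 0 1) := by
  intro u hu v hv huv
  rw [mem_ball_zero_iff] at hu hv
  rw [← mobius_mobius hw (one_sub_conj_mul_ne_zero hw hu.le), huv,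
    mobius_mobius hw (one_sub_conj_mul_ne_zero hw hv.le)]

theorem mobius_image_ball (hw : ‖w‖ < 1) : mobius w '' ball 0 1 = ball 0 1 := by
  refine (mapsTo_iff_image_subset.mp fun u hu ↦ ?_).antisymm fun u hu ↦ ?_
  · rw [mem_ball_zero_iff] at hu ⊢
    exact norm_mobius_lt_one hw hu
  · rw [mem_ball_zero_iff] at hu
    exact ⟨mobius w u, mem_ball_zero_iff.mpr (norm_mobius_lt_one hw hu),
      mobius_mobius hw (one_sub_conj_mul_ne_zero hw hu.le)⟩

theorem poissonKernel_mobius (hw : ‖w‖ < 1) (hu : ‖u‖ ≤ 1) (hv : ‖v‖ = 1) :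
    poissonKernel 0 (mobius w u) (mobius w v)
      = normSq (1 - conj w * v) / (1 - normSq w) * poissonKernel 0 u v := by
  have hu' := one_sub_conj_mul_ne_zero hw hu
  have hv' := one_sub_conj_mul_ne_zero hw hv.le
  have ht : 1 - normSq w ≠ 0 := by exact_mod_cast one_sub_normSq_ne_zero hw
  simp only [poissonKernel, sub_zero, norm_mobius_of_norm_eq_one hw hv, hv, one_pow,
    ← normSq_eq_norm_sq]
  rw [one_sub_normSq_mobius hu', mobius_sub_mobius hv' hu', normSq_div, normSq_mul, normSq_mul]
  have hN : normSq (1 - conj w * u) ≠ 0 := normSq_eq_zero.not.mpr hu'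
  rw [← ofReal_one, ← ofReal_sub, normSq_ofReal, ofReal_one, ← normSq_neg (u - v), neg_sub]
  field_simp

theorem normSq_one_sub_conj_mul_of_norm_eq_one (hv : ‖v‖ = 1) :
    normSq (1 - conj w * v) = normSq (w - v) := by
  have h := normSq_one_sub_conj_mul_sub_normSq_sub w v
  rw [normSq_eq_norm_sq v, hv] at h
  linarith

theorem hasDerivAt_inv_one_sub_conj_mul (hu : 1 - conj w * u ≠ 0) :
    HasDerivAt (fun z ↦ (1 - conj w * z)⁻¹) (conj w / (1 - conj w * u) ^ 2) u := by
  have h : HasDerivAt (fun z ↦ (1 - conj w * z)⁻¹) (-(-(conj w * 1)) / (1 - conj w * u) ^ 2) u :=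
    (((hasDerivAt_id' u).const_mul (conj w)).const_sub 1).inv hu
  simpa using h

theorem deriv_comp_mobius_mul_deriv_mobius (hw : ‖w‖ < 1) (hu : 1 - conj w * u ≠ 0) :
    conj w / (1 - conj w * mobius w u) ^ 2 * (-(1 - normSq w) / (1 - conj w * u) ^ 2)
      = -conj w / (1 - normSq w) := by
  rw [one_sub_conj_mul_mobius hu]
  field_simp [one_sub_normSq_ne_zero hw]

theorem normSq_deriv_mobius_mul_integrand_mobius {ζ : ℂ} (hw : ‖w‖ < 1) (hu : ‖u‖ ≤ 1)
    (hζ : ‖ζ‖ = 1) :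
    normSq (-(1 - normSq w) / (1 - conj w * u) ^ 2) *
        (‖conj w / (1 - conj w * mobius w u) ^ 2‖ ^ 2 * poissonKernel 0 (mobius w u) ζ)
      = ‖w‖ ^ 2 / ((1 - ‖w‖ ^ 2) * ‖ζ - w‖ ^ 2) * poissonKernel 0 u (mobius w ζ) := by
  have hu' := one_sub_conj_mul_ne_zero hw hu
  have hζ' := one_sub_conj_mul_ne_zero hw hζ.le
  have ht : (1 : ℂ) - normSq w = ((1 - normSq w : ℝ) : ℂ) := by push_cast; rfl
  have ht₀ : 1 - normSq w ≠ 0 := by exact_mod_cast one_sub_normSq_ne_zero hw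
  calc normSq (-(1 - normSq w) / (1 - conj w * u) ^ 2) *
        (‖conj w / (1 - conj w * mobius w u) ^ 2‖ ^ 2 * poissonKernel 0 (mobius w u) ζ)
      = normSq (conj w / (1 - conj w * mobius w u) ^ 2 * (-(1 - normSq w) / (1 - conj w * u) ^ 2))
          * poissonKernel 0 (mobius w u) (mobius w (mobius w ζ)) := by
        rw [normSq_mul, ← normSq_eq_norm_sq, mobius_mobius hw hζ']
        ring
    _ = normSq (-conj w / (1 - normSq w)) *
          (normSq (1 - conj w * mobius w ζ) / (1 - normSq w) * poissonKernel 0 u (mobius w ζ)) := by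
        rw [deriv_comp_mobius_mul_deriv_mobius hw hu',
          poissonKernel_mobius hw hu (norm_mobius_of_norm_eq_one hw hζ)]
    _ = ‖w‖ ^ 2 / ((1 - ‖w‖ ^ 2) * ‖ζ - w‖ ^ 2) * poissonKernel 0 u (mobius w ζ) := by
        rw [one_sub_conj_mul_mobius hζ', normSq_div, normSq_div, normSq_neg, normSq_conj, ht,
          normSq_ofReal, normSq_one_sub_conj_mul_of_norm_eq_one hζ, ← normSq_eq_norm_sq,
          ← normSq_eq_norm_sq, ← normSq_neg (w - ζ), neg_sub]
        field_simp

end Mobius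

end Complex

theorem stmt15 (ζ : ℂ) (hζ : ‖ζ‖ = 1)
    (w : ℂ) (hw : ‖w‖ < 1) :
    (1 / π) * ∫ z in Metric.ball (0:ℂ) 1,
        (‖deriv (fun u : ℂ => (1 - (starRingEnd ℂ) w * u)⁻¹) z‖ ^ 2 *
          ((1 - ‖z‖ ^ 2) / ‖z - ζ‖ ^ 2)) =
      ‖w‖ ^ 2 / ((1 - ‖w‖ ^ 2) * ‖ζ - w‖ ^ 2) := by
  have hball {u : ℂ} (hu : u ∈ ball 0 1) : 1 - conj w * u ≠ 0 :=
    Complex.one_sub_conj_mul_ne_zero hw (mem_ball_zero_iff.mp hu).le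
  set F : ℂ → ℝ := fun z ↦ ‖conj w / (1 - conj w * z) ^ 2‖ ^ 2 * poissonKernel 0 z ζ
  have hF : ∀ z ∈ ball 0 1, ‖deriv (fun u : ℂ => (1 - (starRingEnd ℂ) w * u)⁻¹) z‖ ^ 2 *
      ((1 - ‖z‖ ^ 2) / ‖z - ζ‖ ^ 2) = F z := fun z hz ↦ by
    simp [F, (Complex.hasDerivAt_inv_one_sub_conj_mul (hball hz)).deriv, poissonKernel, hζ,
      norm_sub_rev z ζ]
  calc (1 / π) * ∫ z in ball 0 1, ‖deriv (fun u : ℂ => (1 - (starRingEnd ℂ) w * u)⁻¹) z‖ ^ 2 *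
          ((1 - ‖z‖ ^ 2) / ‖z - ζ‖ ^ 2)
      = (1 / π) * ∫ z in Complex.mobius w '' ball 0 1, F z := by
        rw [Complex.mobius_image_ball hw, setIntegral_congr_fun measurableSet_ball hF]
    _ = (1 / π) * ∫ u in ball 0 1, ‖w‖ ^ 2 / ((1 - ‖w‖ ^ 2) * ‖ζ - w‖ ^ 2) *
          poissonKernel 0 u (Complex.mobius w ζ) := by
        rw [Complex.integral_image_eq_integral_normSq_deriv_smul measurableSet_ball
          (fun u hu ↦ (Complex.hasDerivAt_mobius (hball hu)).hasDerivWithinAt)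
          (Complex.injOn_mobius_ball hw)]
        exact congrArg _ (setIntegral_congr_fun measurableSet_ball fun u hu ↦
          Complex.normSq_deriv_mobius_mul_integrand_mobius hw (mem_ball_zero_iff.mp hu).le hζ)
    _ = ‖w‖ ^ 2 / ((1 - ‖w‖ ^ 2) * ‖ζ - w‖ ^ 2) := by
        rw [integral_const_mul, Complex.integral_ball_poissonKernel zero_le_one
          (Complex.norm_mobius_of_norm_eq_one hw hζ).ge]
        field_simp
end
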